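/- arXiv:1604.03547 — 6 statements merged into one kernel-verified Lean document; each statement's English description precedes it below -/
import Mathlib

section
/- Let B be a separable Banach space, (x_n) a dense sequence in B, and (f_n) functionals in B* with f_n(x_n) = ‖x_n‖² and ‖f_n‖ = ‖x_n‖ (duality mappings). With t_n = 1/(‖f_n‖² · 2ⁿ), the map ⟨u,v⟩ = Σ_{n=1}^∞ t_n f_n(u) · conj(f_n(v)) defines an inner product on B (i.e., it is a positive definite sesquilinear form). -/
/-!
Each term of the series is bounded by `‖u‖ ‖v‖ / 2 ^ (n + 1)`, so the form is a convergent weighted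
sum of the symmetric bilinear forms `f n u * f n v` with nonnegative weights; symmetry, bilinearity
and positivity pass to the sum. For definiteness, `Φ u u = 0` forces `f n u = 0` for every `n`, and
then `‖x n‖² = f n (x n - u) ≤ ‖x n‖ ‖x n - u‖` gives `‖u‖ ≤ 2 ‖x n - u‖`. This closed condition on
`x n` holds on a dense set, hence also at `u` itself, so `‖u‖ ≤ 0`.
-/

lemma summable_one_div_mul_two_pow_mul (a : ℕ → ℝ) :
    Summable fun n => 1 / (a n * 2 ^ (n + 1)) * a n := by
  refine (summable_geometric_two.mul_left (1 / 2)).of_norm_bounded fun n => ?_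
  rw [← pow_succ']
  by_cases ha : a n = 0
  · simp [ha]
  · rw [one_div_mul_eq_div, div_mul_cancel_left₀ ha, norm_inv, norm_pow, Real.norm_two,
      one_div, inv_pow]

section WeightedDualForm

variable {E : Type*} [SeminormedAddCommGroup E] [NormedSpace ℝ E]
  (f : ℕ → E →L[ℝ] ℝ) {t : ℕ → ℝ}

lemma summable_mul_apply_mul_apply (ht0 : ∀ n, 0 ≤ t n)
    (hs : Summable fun n => t n * ‖f n‖ ^ 2) (u v : E) :
    Summable fun n => t n * f n u * f n v := by
  refine (hs.mul_right (‖u‖ * ‖v‖)).of_norm_bounded fun n => ?_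
  calc ‖t n * f n u * f n v‖ = t n * (‖f n u‖ * ‖f n v‖) := by
        rw [norm_mul, norm_mul, Real.norm_of_nonneg (ht0 n), mul_assoc]
    _ ≤ t n * ((‖f n‖ * ‖u‖) * (‖f n‖ * ‖v‖)) := by
        gcongr
        exacts [ht0 n, (f n).le_opNorm _, (f n).le_opNorm _]
    _ = t n * ‖f n‖ ^ 2 * (‖u‖ * ‖v‖) := by ring

lemma apply_eq_zero_of_tsum_mul_apply_mul_apply_eq_zero (ht0 : ∀ n, 0 ≤ t n)
    (hs : Summable fun n => t n * ‖f n‖ ^ 2) (htf : ∀ n, t n = 0 → f n = 0) {u : E}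
    (hu : ∑' n, t n * f n u * f n u = 0) (n : ℕ) : f n u = 0 := by
  have hnonneg : ∀ m, 0 ≤ t m * f m u * f m u := fun m => by
    rw [mul_assoc]; exact mul_nonneg (ht0 m) (mul_self_nonneg _)
  have hterm : t n * f n u * f n u = 0 := congr_fun ((hasSum_zero_iff_of_nonneg hnonneg).1
    (hu ▸ (summable_mul_apply_mul_apply f ht0 hs u u).hasSum)) n
  rw [mul_assoc] at hterm
  rcases mul_eq_zero.1 hterm with h | h
  · simp [htf n h]
  · exact mul_self_eq_zero.1 h

end WeightedDualForm

lemma norm_le_norm_sub_of_apply_eq_zero {E : Type*} [SeminormedAddCommGroup E] [NormedSpace ℝ E]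
    {g : E →L[ℝ] ℝ} {x u : E} (hdual : g x = ‖x‖ ^ 2) (hnorm : ‖g‖ = ‖x‖) (hu : g u = 0) :
    ‖x‖ ≤ ‖x - u‖ := by
  have h : ‖x‖ * ‖x‖ ≤ ‖x‖ * ‖x - u‖ :=
    calc ‖x‖ * ‖x‖ = g (x - u) := by rw [map_sub, hu, sub_zero, hdual, sq]
      _ ≤ ‖g‖ * ‖x - u‖ := (le_abs_self _).trans (g.le_opNorm _)
      _ = ‖x‖ * ‖x - u‖ := by rw [hnorm]
  rcases (norm_nonneg x).eq_or_lt with hx | hx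
  · rw [← hx]; exact norm_nonneg _
  · exact le_of_mul_le_mul_left h hx

lemma eq_zero_of_forall_dual_apply_eq_zero {E : Type*} [NormedAddCommGroup E] [NormedSpace ℝ E]
    {x : ℕ → E} (hx : DenseRange x) {f : ℕ → E →L[ℝ] ℝ}
    (hdual : ∀ n, f n (x n) = ‖x n‖ ^ 2) (hnorm : ∀ n, ‖f n‖ = ‖x n‖) {u : E}
    (hu : ∀ n, f n u = 0) : u = 0 := by
  have h : ‖u‖ ≤ 2 * ‖u - u‖ := by
    refine hx.induction_on (p := fun y => ‖u‖ ≤ 2 * ‖y - u‖) u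
      (isClosed_le continuous_const (by fun_prop)) fun n => ?_
    have hxn := norm_le_norm_sub_of_apply_eq_zero (hdual n) (hnorm n) (hu n)
    have htri : ‖u‖ ≤ ‖u - x n‖ + ‖x n‖ := norm_le_norm_sub_add u (x n)
    rw [norm_sub_rev] at htri
    linarith
  simpa using h

theorem kuelbs_inner_product_general
    (B : Type*) [NormedAddCommGroup B] [NormedSpace ℝ B]
    (x : ℕ → B) (hxdense : DenseRange x)
    (f : ℕ → B →L[ℝ] ℝ)
    (hdual : ∀ n, f n (x n) = ‖x n‖ ^ 2)
    (hnorm : ∀ n, ‖f n‖ = ‖x n‖)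
    (t : ℕ → ℝ) (ht : ∀ n, t n = 1 / (‖f n‖ ^ 2 * 2 ^ (n + 1)))
    (Φ : B → B → ℝ) (hΦ : ∀ u v, Φ u v = ∑' n, t n * (f n u) * (f n v)) :
    (∀ u v, Φ u v = Φ v u) ∧
    (∀ u v w, Φ (u + v) w = Φ u w + Φ v w) ∧
    (∀ (a : ℝ) (u v : B), Φ (a • u) v = a * Φ u v) ∧
    (∀ u, 0 ≤ Φ u u) ∧
    (∀ u, Φ u u = 0 → u = 0) := by
  have ht0 : ∀ n, 0 ≤ t n := fun n => by rw [ht]; positivity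
  have hs : Summable fun n => t n * ‖f n‖ ^ 2 := by
    simpa only [ht] using summable_one_div_mul_two_pow_mul fun n => ‖f n‖ ^ 2
  -- `1 / 0 = 0`: a vanishing weight only occurs where `f n = 0`.
  have htf : ∀ n, t n = 0 → f n = 0 := fun n h => by
    simpa [ht] using h
  have hsum := summable_mul_apply_mul_apply f ht0 hs
  refine ⟨fun u v => ?_, fun u v w => ?_, fun a u v => ?_, fun u => ?_, fun u hu => ?_⟩
  · simp only [hΦ, mul_right_comm]
  · rw [hΦ, hΦ, hΦ, ← (hsum u w).tsum_add (hsum v w)]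
    simp only [map_add, mul_add, add_mul]
  · rw [hΦ, hΦ, ← tsum_mul_left]
    simp only [map_smul, smul_eq_mul, mul_left_comm a, mul_assoc]
  · rw [hΦ]
    exact tsum_nonneg fun n => mul_assoc (t n) _ _ ▸ mul_nonneg (ht0 n) (mul_self_nonneg _)
  · rw [hΦ] at hu
    exact eq_zero_of_forall_dual_apply_eq_zero hxdense hdual hnorm
      (apply_eq_zero_of_tsum_mul_apply_mul_apply_eq_zero f ht0 hs htf hu)

/-- the weighted sum of duality functionals defines an inner product
(symmetric, bilinear, positive definite form) on a separable Banach space. -/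
theorem kuelbs_inner_product
    (B : Type*) [NormedAddCommGroup B] [NormedSpace ℝ B] [CompleteSpace B]
    [TopologicalSpace.SeparableSpace B]
    (x : ℕ → B) (hxdense : DenseRange x) (hxne : ∀ n, x n ≠ 0)
    (f : ℕ → B →L[ℝ] ℝ)
    (hdual : ∀ n, f n (x n) = ‖x n‖ ^ 2)
    (hnorm : ∀ n, ‖f n‖ = ‖x n‖)
    (t : ℕ → ℝ) (ht : ∀ n, t n = 1 / (‖f n‖ ^ 2 * 2 ^ (n + 1)))
    (Φ : B → B → ℝ) (hΦ : ∀ u v, Φ u v = ∑' n, t n * (f n u) * (f n v)) :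
    (∀ u v, Φ u v = Φ v u) ∧
    (∀ u v w, Φ (u + v) w = Φ u w + Φ v w) ∧
    (∀ (a : ℝ) (u v : B), Φ (a • u) v = a * Φ u v) ∧
    (∀ u, 0 ≤ Φ u u) ∧
    (∀ u, Φ u u = 0 → u = 0) :=
  kuelbs_inner_product_general B x hxdense f hdual hnorm t ht Φ hΦ
end

section
/- Every infinite-dimensional separable Banach space B admits a continuous dense embedding into a separable Hilbert space H₂ (i.e., there exist a separable Hilbert space H₂ and an injective bounded linear map j : B → H₂ with dense range). -/
/-!
Norming functionals `f n` of a dense sequence separate points, so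
`x ↦ (2⁻ⁿ f n x)ₙ` is an injective bounded operator into `ℓ²(ℕ)`. Corestricted to the closure
of its range it has dense range, and that closure is a separable Hilbert space.
-/

open TopologicalSpace

theorem ContinuousLinearMap.denseRange_codRestrict_topologicalClosure_range
    {R M N : Type*} [Semiring R] [TopologicalSpace M] [AddCommMonoid M] [Module R M]
    [TopologicalSpace N] [AddCommMonoid N] [Module R N] [ContinuousAdd N]
    [ContinuousConstSMul R N] (T : M →L[R] N) :
    DenseRange (T.codRestrict (LinearMap.range (T : M →ₗ[R] N)).topologicalClosure
      fun x => Submodule.le_topologicalClosure _ (LinearMap.mem_range_self (T : M →ₗ[R] N) x)) := by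
  intro y
  rw [closure_subtype, ← Set.range_comp]
  exact y.2

section

variable {𝕜 E : Type*} [RCLike 𝕜] [NormedAddCommGroup E] [NormedSpace 𝕜 E]

theorem exists_seq_strongDual_norm_le_one_separating [SeparableSpace E] :
    ∃ f : ℕ → StrongDual 𝕜 E, (∀ n, ‖f n‖ ≤ 1) ∧ ∀ x, (∀ n, f n x = 0) → x = 0 := by
  choose f hf_norm hf_eval using fun n => exists_dual_vector'' 𝕜 (denseSeq E n)
  refine ⟨f, hf_norm, fun x hx => norm_le_zero_iff.mp ?_⟩
  -- A closed condition on `y` that holds on the dense sequence; at `y = x` it forces `x = 0`.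
  have key : ∀ y, ‖x‖ ≤ 2 * ‖x - y‖ :=
    isClosed_property (denseRange_denseSeq E)
      (isClosed_le continuous_const (by fun_prop)) fun n => by
        have h : ‖denseSeq E n‖ ≤ ‖x - denseSeq E n‖ :=
          calc ‖denseSeq E n‖ = ‖f n (denseSeq E n - x)‖ := by simp [hx n, hf_eval n]
            _ ≤ 1 * ‖denseSeq E n - x‖ := (f n).le_of_opNorm_le (hf_norm n) _
            _ = ‖x - denseSeq E n‖ := by rw [one_mul, norm_sub_rev]
        linarith [norm_le_insert' x (denseSeq E n)]
  simpa using key x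

theorem exists_clm_lp_two_apply_of_summable_sq {f : ℕ → StrongDual 𝕜 E}
    (hf : Summable fun n => ‖f n‖ ^ 2) :
    ∃ T : E →L[𝕜] lp (fun _ : ℕ => 𝕜) 2, ∀ x n, T x n = f n x := by
  have hbound (x : E) (n : ℕ) : ‖f n x‖ ^ 2 ≤ ‖f n‖ ^ 2 * ‖x‖ ^ 2 := by
    rw [← mul_pow]; gcongr; exact (f n).le_opNorm x
  have hsum (x : E) : Summable fun n => ‖f n x‖ ^ 2 :=
    .of_nonneg_of_le (fun n => by positivity) (hbound x) (hf.mul_right _)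
  have hmem (x : E) : Memℓp (fun n => f n x) 2 := memℓp_gen (by simpa using hsum x)
  let T : E →ₗ[𝕜] lp (fun _ : ℕ => 𝕜) 2 :=
    { toFun x := ⟨fun n => f n x, hmem x⟩
      map_add' x y := by ext n; exact map_add (f n) x y
      map_smul' c x := by ext n; exact map_smul (f n) c x }
  refine ⟨T.mkContinuous √(∑' n, ‖f n‖ ^ 2) fun x => ?_, fun x n => rfl⟩
  refine lp.norm_le_of_tsum_le (by norm_num) (by positivity) ?_
  simp only [ENNReal.toReal_ofNat, Real.rpow_two, mul_pow,
    Real.sq_sqrt (tsum_nonneg fun n => sq_nonneg _)]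
  rw [← tsum_mul_right]
  exact (hsum x).tsum_le_tsum (hbound x) (hf.mul_right _)

theorem exists_injective_clm_lp_two [SeparableSpace E] :
    ∃ T : E →L[𝕜] lp (fun _ : ℕ => 𝕜) 2, Function.Injective T := by
  obtain ⟨f, hf_norm, hf_sep⟩ := exists_seq_strongDual_norm_le_one_separating (𝕜 := 𝕜) (E := E)
  have hsummable : Summable fun n => ‖(2⁻¹ : 𝕜) ^ n • f n‖ ^ 2 := by
    refine .of_nonneg_of_le (fun n => by positivity) (fun n => ?_)
      (summable_geometric_of_lt_one (r := 4⁻¹) (by norm_num) (by norm_num))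
    calc ‖(2⁻¹ : 𝕜) ^ n • f n‖ ^ 2 ≤ ((2⁻¹ : ℝ) ^ n * 1) ^ 2 := by
          rw [norm_smul, norm_pow, norm_inv, RCLike.norm_two]; gcongr; exact hf_norm n
      _ = (4⁻¹ : ℝ) ^ n := by rw [mul_one, ← pow_mul, mul_comm, pow_mul]; norm_num
  obtain ⟨T, hT⟩ := exists_clm_lp_two_apply_of_summable_sq hsummable
  refine ⟨T, (injective_iff_map_eq_zero T).mpr fun x hx => hf_sep x fun n => ?_⟩
  simpa [hx] using (hT x n).symm

end

theorem kuelbs_embedding_general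
    (B : Type*) [NormedAddCommGroup B] [NormedSpace ℝ B]
    [TopologicalSpace.SeparableSpace B] :
    ∃ (H : Type) (nG : NormedAddCommGroup H) (iP : @InnerProductSpace ℝ H _ nG.toSeminormedAddCommGroup),
      CompleteSpace H ∧ TopologicalSpace.SeparableSpace H ∧
      ∃ j : B →L[ℝ] H, Function.Injective j ∧ DenseRange j := by
  obtain ⟨T, hT⟩ := exists_injective_clm_lp_two (𝕜 := ℝ) (E := B)
  have hdense := T.denseRange_codRestrict_topologicalClosure_range
  exact ⟨_, inferInstance, inferInstance, inferInstance, hdense.separableSpace (map_continuous _),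
    _, fun x y h => hT (congrArg Subtype.val h), hdense⟩

/-- Kuelbs: every infinite-dimensional separable Banach space embeds
continuously, injectively and densely into a separable Hilbert space. -/
theorem kuelbs_embedding
    (B : Type*) [NormedAddCommGroup B] [NormedSpace ℝ B] [CompleteSpace B]
    [TopologicalSpace.SeparableSpace B]
    (hinf : ¬ FiniteDimensional ℝ B) :
    ∃ (H : Type) (nG : NormedAddCommGroup H) (iP : @InnerProductSpace ℝ H _ nG.toSeminormedAddCommGroup),
      CompleteSpace H ∧ TopologicalSpace.SeparableSpace H ∧
      ∃ j : B →L[ℝ] H, Function.Injective j ∧ DenseRange j :=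
  kuelbs_embedding_general B
end

section
/- (Lax's theorem) Let B be a Banach space continuously and densely embedded in a Hilbert space H, and let A : B → B be a bounded linear operator that is symmetric with respect to the H-inner product, i.e., (Ax, y)_H = (x, Ay)_H for all x, y ∈ B. Then A extends to a bounded operator on H with ‖A‖_{L(H)} ≤ ‖A‖_{L(B)}. -/
/-!
Symmetry gives `‖j (A y)‖² = ⟪j y, j (A² y)⟫ ≤ ‖j y‖ ‖j (A² y)‖`, so the sequence
`aₙ = ‖j (Aⁿ x)‖` is log-convex and hence grows at least geometrically with ratio `a₁ / a₀`.
Since also `aₙ ≤ ‖j‖ ‖A‖ⁿ ‖x‖`, that ratio is at most `‖A‖`, i.e. `‖j (A x)‖ ≤ ‖A‖ ‖j x‖`.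
This bound lets `j ∘ A` extend from the dense range of `j` to all of `H` with norm `≤ ‖A‖`.
-/

open Filter Topology

theorem ContinuousLinearMap.norm_iterate_apply_le {𝕜 E : Type*} [NontriviallyNormedField 𝕜]
    [SeminormedAddCommGroup E] [NormedSpace 𝕜 E] (A : E →L[𝕜] E) (n : ℕ) (x : E) :
    ‖A^[n] x‖ ≤ ‖A‖ ^ n * ‖x‖ := by
  induction n with
  | zero => simp
  | succ n ih =>
    calc ‖A^[n + 1] x‖ = ‖A (A^[n] x)‖ := by rw [Function.iterate_succ_apply']
      _ ≤ ‖A‖ * ‖A^[n] x‖ := A.le_opNorm _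
      _ ≤ ‖A‖ * (‖A‖ ^ n * ‖x‖) := by gcongr
      _ = ‖A‖ ^ (n + 1) * ‖x‖ := by ring

section LogConvex

variable {a : ℕ → ℝ} (ha : ∀ k, 0 ≤ a k) (hconv : ∀ k, a (k + 1) ^ 2 ≤ a k * a (k + 2))
include ha hconv

theorem mul_le_mul_succ_of_sq_le_mul (k : ℕ) : a 1 * a k ≤ a 0 * a (k + 1) := by
  induction k with
  | zero => rw [mul_comm]
  | succ k ih =>
    rcases (ha k).eq_or_lt with hk | hk
    · have : a (k + 1) ^ 2 ≤ 0 := by simpa [← hk] using hconv k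
      rw [pow_eq_zero_iff two_ne_zero |>.1 (le_antisymm this (sq_nonneg _)), mul_zero]
      exact mul_nonneg (ha 0) (ha _)
    · refine le_of_mul_le_mul_left ?_ hk
      calc a k * (a 1 * a (k + 1)) = a (k + 1) * (a 1 * a k) := by ring
        _ ≤ a (k + 1) * (a 0 * a (k + 1)) := by gcongr; exact ha _
        _ = a 0 * a (k + 1) ^ 2 := by ring
        _ ≤ a 0 * (a k * a (k + 2)) := by gcongr; exacts [ha 0, hconv k]
        _ = a k * (a 0 * a (k + 1 + 1)) := by ring

theorem pow_mul_le_pow_mul_of_sq_le_mul (n : ℕ) : a 1 ^ n * a 0 ≤ a 0 ^ n * a n := by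
  induction n with
  | zero => simp
  | succ n ih =>
    calc a 1 ^ (n + 1) * a 0 = a 1 * (a 1 ^ n * a 0) := by ring
      _ ≤ a 1 * (a 0 ^ n * a n) := by gcongr; exact ha 1
      _ = a 0 ^ n * (a 1 * a n) := by ring
      _ ≤ a 0 ^ n * (a 0 * a (n + 1)) :=
        mul_le_mul_of_nonneg_left (mul_le_mul_succ_of_sq_le_mul ha hconv n) (pow_nonneg (ha 0) n)
      _ = a 0 ^ (n + 1) * a (n + 1) := by ring

theorem le_mul_of_sq_le_mul_of_le_mul_pow {C M : ℝ} (hM : 0 ≤ M)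
    (hbound : ∀ n, a n ≤ C * M ^ n) : a 1 ≤ M * a 0 := by
  by_contra! hlt
  have ha1 : 0 < a 1 := (mul_nonneg hM (ha 0)).trans_lt hlt
  set q := M * a 0 / a 1
  have hq : ∀ n, a 0 ≤ C * q ^ n := fun n => by
    rw [div_pow, mul_div_assoc', le_div_iff₀ (pow_pos ha1 n), mul_comm (a 0)]
    calc a 1 ^ n * a 0 ≤ a 0 ^ n * a n := pow_mul_le_pow_mul_of_sq_le_mul ha hconv n
      _ ≤ a 0 ^ n * (C * M ^ n) := by gcongr; exacts [pow_nonneg (ha 0) n, hbound n]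
      _ = C * (M * a 0) ^ n := by ring
  have hq_lim : Tendsto (fun n => C * q ^ n) atTop (𝓝 0) := by
    simpa using (tendsto_pow_atTop_nhds_zero_of_lt_one
      (div_nonneg (mul_nonneg hM (ha 0)) ha1.le) ((div_lt_one ha1).2 hlt)).const_mul C
  have ha0 : a 0 = 0 := le_antisymm (ge_of_tendsto' hq_lim hq) (ha 0)
  have : a 1 ^ 2 ≤ 0 := by simpa [ha0] using hconv 0
  nlinarith

end LogConvex

section Symmetric

variable {B H : Type*} [SeminormedAddCommGroup B] [NormedSpace ℝ B]
  [SeminormedAddCommGroup H] [InnerProductSpace ℝ H] (j : B →L[ℝ] H) (A : B →L[ℝ] B)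
  (hsym : ∀ x y : B, (inner ℝ (j (A x)) (j y) : ℝ) = (inner ℝ (j x) (j (A y)) : ℝ))
include hsym

theorem sq_norm_apply_le_of_symm (y : B) : ‖j (A y)‖ ^ 2 ≤ ‖j y‖ * ‖j (A (A y))‖ := by
  rw [← real_inner_self_eq_norm_sq, hsym]
  exact real_inner_le_norm _ _

theorem norm_apply_le_of_symm (x : B) : ‖j (A x)‖ ≤ ‖A‖ * ‖j x‖ := by
  have hconv (k : ℕ) : ‖j (A^[k + 1] x)‖ ^ 2 ≤ ‖j (A^[k] x)‖ * ‖j (A^[k + 2] x)‖ := by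
    simpa only [Function.iterate_succ_apply'] using sq_norm_apply_le_of_symm j A hsym (A^[k] x)
  have hbound (n : ℕ) : ‖j (A^[n] x)‖ ≤ ‖j‖ * ‖x‖ * ‖A‖ ^ n :=
    calc ‖j (A^[n] x)‖ ≤ ‖j‖ * ‖A^[n] x‖ := j.le_opNorm _
      _ ≤ ‖j‖ * (‖A‖ ^ n * ‖x‖) := by gcongr; exact A.norm_iterate_apply_le n x
      _ = ‖j‖ * ‖x‖ * ‖A‖ ^ n := by ring
  simpa using le_mul_of_sq_le_mul_of_le_mul_pow (a := fun n => ‖j (A^[n] x)‖)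
    (fun _ => norm_nonneg _) hconv (norm_nonneg A) hbound

end Symmetric

theorem lax_theorem_general
    (B : Type*) [NormedAddCommGroup B] [NormedSpace ℝ B]
    (H : Type*) [NormedAddCommGroup H] [InnerProductSpace ℝ H] [CompleteSpace H]
    (j : B →L[ℝ] H) (hd : DenseRange j)
    (A : B →L[ℝ] B)
    (hsym : ∀ x y : B, (inner ℝ (j (A x)) (j y) : ℝ) = (inner ℝ (j x) (j (A y)) : ℝ)) :
    ∃ Abar : H →L[ℝ] H, (∀ x : B, Abar (j x) = j (A x)) ∧ ‖Abar‖ ≤ ‖A‖ := by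
  have hbound := norm_apply_le_of_symm j A hsym
  refine ⟨((j : B →ₗ[ℝ] H) ∘ₗ (A : B →ₗ[ℝ] B)).extendOfNorm (j : B →ₗ[ℝ] H), fun x => ?_, ?_⟩
  · exact LinearMap.extendOfNorm_eq hd ⟨‖A‖, hbound⟩ x
  · exact LinearMap.opNorm_extendOfNorm_le hd (norm_nonneg A) hbound

/-- Lax's theorem: a bounded operator on B that is symmetric with
respect to the inner product of an ambient Hilbert space H (in which B embeds
continuously and densely) extends to a bounded operator on H with
‖Ā‖_{L(H)} ≤ ‖A‖_{L(B)}. -/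
theorem lax_theorem
    (B : Type*) [NormedAddCommGroup B] [NormedSpace ℝ B] [CompleteSpace B]
    (H : Type*) [NormedAddCommGroup H] [InnerProductSpace ℝ H] [CompleteSpace H]
    (j : B →L[ℝ] H) (hj : Function.Injective j) (hd : DenseRange j)
    (A : B →L[ℝ] B)
    (hsym : ∀ x y : B, (inner ℝ (j (A x)) (j y) : ℝ) = (inner ℝ (j x) (j (A y)) : ℝ)) :
    ∃ Abar : H →L[ℝ] H, (∀ x : B, Abar (j x) = j (A x)) ∧ ‖Abar‖ ≤ ‖A‖ :=
  lax_theorem_general B H j hd A hsym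
end

section
/- Let H be a Hilbert space, B a Banach space densely continuously embedded in H, and A : B → B bounded and H-symmetric on B. Then for every x ∈ B and every n ≥ 1, ‖Ax‖_H^{2ⁿ} ≤ ‖A^{2ⁿ} x‖_H · ‖x‖_H^{2ⁿ - 1} (the key iterated Cauchy–Schwarz inequality in Lax's proof; in particular for ‖x‖_H = 1, ‖Ax‖_H^{2ⁿ} ≤ ‖A^{2ⁿ}x‖_H). -/
/-!
Symmetry of `A` passes to its powers, so `‖A^k x‖² = ⟪x, A^(2k) x⟫ ≤ ‖x‖ ‖A^(2k) x‖` by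
Cauchy–Schwarz. Squaring the inequality for `2^n` and applying this bound with `k = 2^n`
doubles the exponent at each step.
-/

open scoped InnerProductSpace

section Symmetric

variable {𝕜 B H : Type*} [RCLike 𝕜] [NormedAddCommGroup H] [InnerProductSpace 𝕜 H]
  {j : B → H} {T : B → B}

theorem inner_iterate_eq_of_symm (hT : ∀ x y, ⟪j (T x), j y⟫_𝕜 = ⟪j x, j (T y)⟫_𝕜)
    (k : ℕ) (x y : B) : ⟪j (T^[k] x), j y⟫_𝕜 = ⟪j x, j (T^[k] y)⟫_𝕜 := by
  induction k generalizing x with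
  | zero => rfl
  | succ k ih =>
    rw [Function.iterate_succ_apply, ih, hT, ← Function.iterate_succ_apply' T]

theorem norm_iterate_sq_le_of_symm (hT : ∀ x y, ⟪j (T x), j y⟫_𝕜 = ⟪j x, j (T y)⟫_𝕜)
    (k : ℕ) (x : B) : ‖j (T^[k] x)‖ ^ 2 ≤ ‖j x‖ * ‖j (T^[2 * k] x)‖ := by
  calc ‖j (T^[k] x)‖ ^ 2 = RCLike.re ⟪j (T^[k] x), j (T^[k] x)⟫_𝕜 :=
        (inner_self_eq_norm_sq _).symm
    _ = RCLike.re ⟪j x, j (T^[2 * k] x)⟫_𝕜 := by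
        rw [inner_iterate_eq_of_symm hT, ← Function.iterate_add_apply, two_mul]
    _ ≤ ‖j x‖ * ‖j (T^[2 * k] x)‖ := re_inner_le_norm _ _

end Symmetric

theorem pow_two_pow_le_of_sq_le_mul {a : ℕ → ℝ} {c : ℝ} (ha : 0 ≤ a 1)
    (hsq : ∀ k, a k ^ 2 ≤ c * a (2 * k)) (n : ℕ) :
    a 1 ^ 2 ^ n ≤ a (2 ^ n) * c ^ (2 ^ n - 1) := by
  induction n with
  | zero => simp
  | succ n ih =>
    have hexp : 2 ^ (n + 1) - 1 = 2 * (2 ^ n - 1) + 1 := by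
      have := Nat.one_le_two_pow (n := n)
      rw [pow_succ]; omega
    calc a 1 ^ 2 ^ (n + 1) = (a 1 ^ 2 ^ n) ^ 2 := by rw [pow_succ, pow_mul]
      _ ≤ (a (2 ^ n) * c ^ (2 ^ n - 1)) ^ 2 := by gcongr
      _ = a (2 ^ n) ^ 2 * (c ^ (2 ^ n - 1)) ^ 2 := mul_pow _ _ _
      _ ≤ c * a (2 * 2 ^ n) * (c ^ (2 ^ n - 1)) ^ 2 := by gcongr; exact hsq _
      _ = a (2 ^ (n + 1)) * c ^ (2 ^ (n + 1) - 1) := by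
        rw [hexp, ← pow_succ', pow_succ, ← pow_mul]; ring

theorem lax_iterated_cauchy_schwarz_general
    (B : Type*) [NormedAddCommGroup B] [NormedSpace ℝ B]
    (H : Type*) [NormedAddCommGroup H] [InnerProductSpace ℝ H]
    (j : B →L[ℝ] H)
    (A : B →L[ℝ] B)
    (hsym : ∀ x y : B, (inner ℝ (j (A x)) (j y) : ℝ) = (inner ℝ (j x) (j (A y)) : ℝ)) :
    ∀ (x : B) (n : ℕ), 1 ≤ n →
      ‖j (A x)‖ ^ (2 ^ n) ≤ ‖j ((A ^ (2 ^ n)) x)‖ * ‖j x‖ ^ (2 ^ n - 1) := by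
  intro x n _
  simp only [FunLike.coe_pow_eq_iterate]
  exact pow_two_pow_le_of_sq_le_mul (a := fun k ↦ ‖j (A^[k] x)‖) (norm_nonneg _)
    (fun k ↦ norm_iterate_sq_le_of_symm hsym k x) n

/-- the iterated Cauchy–Schwarz inequality in Lax's proof:
‖Ax‖_H^(2^n) ≤ ‖A^(2^n) x‖_H · ‖x‖_H^(2^n − 1). -/
theorem lax_iterated_cauchy_schwarz
    (B : Type*) [NormedAddCommGroup B] [NormedSpace ℝ B] [CompleteSpace B]
    (H : Type*) [NormedAddCommGroup H] [InnerProductSpace ℝ H] [CompleteSpace H]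
    (j : B →L[ℝ] H) (hj : Function.Injective j) (hd : DenseRange j)
    (A : B →L[ℝ] B)
    (hsym : ∀ x y : B, (inner ℝ (j (A x)) (j y) : ℝ) = (inner ℝ (j x) (j (A y)) : ℝ)) :
    ∀ (x : B) (n : ℕ), 1 ≤ n →
      ‖j (A x)‖ ^ (2 ^ n) ≤ ‖j ((A ^ (2 ^ n)) x)‖ * ‖j x‖ ^ (2 ^ n - 1) :=
  lax_iterated_cauchy_schwarz_general B H j A hsym
end

section
/- Let H be a Hilbert space and A a symmetric linear operator defined on a dense A-invariant subspace D, such that for some constant C, ‖Aⁿ x‖_H ≤ Cⁿ M(x) for all n and all x ∈ D (where M(x) depends only on x). Then ‖Ax‖_H ≤ C ‖x‖_H for all x ∈ D; consequently A extends to a bounded operator on H of norm at most C. -/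
/-!
For symmetric `A`, `‖Aᵐx‖² = ⟪x, A²ᵐx⟫ ≤ ‖x‖ ‖A²ᵐx‖`; iterating this along `m = 2ⁿ` gives
`‖x‖ ‖Ax‖^(2ⁿ) ≤ ‖A^(2ⁿ)x‖ ‖x‖^(2ⁿ) ≤ M(x) (C‖x‖)^(2ⁿ)`, so the ratio `‖Ax‖ / (C‖x‖)` has
bounded `2ⁿ`-th powers and is therefore at most `1`. The bound `‖Ax‖ ≤ C‖x‖` on the dense
subspace then extends `A` by continuity.
-/

open Filter Topology

theorem le_of_mul_pow_le_mul_pow {a b c K : ℝ} {k : ℕ → ℕ} (hb : 0 ≤ b) (hc : 0 < c)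
    (hk : Tendsto k atTop atTop) (h : ∀ n, c * a ^ k n ≤ K * b ^ k n) : a ≤ b := by
  by_contra! hba
  have ha : 0 < a := hb.trans_lt hba
  have hlim : Tendsto (fun n ↦ K * (b / a) ^ k n) atTop (𝓝 0) := by
    simpa using ((tendsto_pow_atTop_nhds_zero_of_lt_one (div_nonneg hb ha.le)
      ((div_lt_one ha).2 hba)).comp hk).const_mul K
  obtain ⟨n, hn⟩ := (hlim.eventually (gt_mem_nhds hc)).exists
  have hcK : c * a ^ k n ≤ K * (b / a) ^ k n * a ^ k n := by
    rw [div_pow, mul_assoc, div_mul_cancel₀ _ (pow_pos ha _).ne']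
    exact h n
  linarith [le_of_mul_le_mul_right hcK (pow_pos ha _)]

theorem mul_pow_two_pow_le_of_sq_le_mul {s : ℕ → ℝ} (hs : ∀ m, 0 ≤ s m)
    (h : ∀ m, s m ^ 2 ≤ s 0 * s (2 * m)) (n : ℕ) :
    s 0 * s 1 ^ 2 ^ n ≤ s (2 ^ n) * s 0 ^ 2 ^ n := by
  induction n with
  | zero => simp [mul_comm]
  | succ n ih =>
    rcases (hs 0).eq_or_lt with h0 | h0
    · simp [← h0]
    refine le_of_mul_le_mul_left ?_ h0
    calc s 0 * (s 0 * s 1 ^ 2 ^ (n + 1)) = (s 0 * s 1 ^ 2 ^ n) ^ 2 := by ring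
      _ ≤ (s (2 ^ n) * s 0 ^ 2 ^ n) ^ 2 := by
        gcongr
        exact mul_nonneg (hs 0) (pow_nonneg (hs 1) _)
      _ = s (2 ^ n) ^ 2 * s 0 ^ 2 ^ (n + 1) := by ring
      _ ≤ s 0 * s (2 * 2 ^ n) * s 0 ^ 2 ^ (n + 1) := by gcongr; exact h _
      _ = s 0 * (s (2 ^ (n + 1)) * s 0 ^ 2 ^ (n + 1)) := by rw [pow_succ' 2 n]; ring

namespace LinearMap.IsSymmetric

variable {𝕜 E : Type*} [RCLike 𝕜] [NormedAddCommGroup E] [InnerProductSpace 𝕜 E]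
  {T : E →ₗ[𝕜] E}

theorem norm_pow_apply_sq_le (hT : T.IsSymmetric) (m : ℕ) (x : E) :
    ‖(T ^ m) x‖ ^ 2 ≤ ‖x‖ * ‖(T ^ (2 * m)) x‖ := by
  calc ‖(T ^ m) x‖ ^ 2 = RCLike.re (inner 𝕜 x ((T ^ (2 * m)) x)) := by
        rw [← inner_self_eq_norm_sq (𝕜 := 𝕜), hT.pow m, two_mul, pow_add, Module.End.mul_apply]
    _ ≤ ‖x‖ * ‖(T ^ (2 * m)) x‖ := re_inner_le_norm _ _

theorem norm_apply_le_of_norm_pow_apply_le (hT : T.IsSymmetric) {C : ℝ} (hC : 0 ≤ C)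
    {M : E → ℝ} (hpow : ∀ (n : ℕ) (x : E), ‖(T ^ n) x‖ ≤ C ^ n * M x) (x : E) :
    ‖T x‖ ≤ C * ‖x‖ := by
  rcases (norm_nonneg x).eq_or_lt with hx | hx
  · simp [norm_eq_zero.1 hx.symm]
  refine le_of_mul_pow_le_mul_pow (mul_nonneg hC hx.le) hx
    (tendsto_pow_atTop_atTop_of_one_lt one_lt_two) (K := M x) fun n ↦ ?_
  calc ‖x‖ * ‖T x‖ ^ 2 ^ n ≤ ‖(T ^ 2 ^ n) x‖ * ‖x‖ ^ 2 ^ n := by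
        simpa using mul_pow_two_pow_le_of_sq_le_mul (s := fun m ↦ ‖(T ^ m) x‖)
          (fun _ ↦ norm_nonneg _) (fun m ↦ hT.norm_pow_apply_sq_le m x) n
    _ ≤ C ^ 2 ^ n * M x * ‖x‖ ^ 2 ^ n := by gcongr; exact hpow _ x
    _ = M x * (C * ‖x‖) ^ 2 ^ n := by ring

end LinearMap.IsSymmetric

/-- a symmetric operator on a dense invariant subspace whose powers
satisfy ‖Aⁿx‖ ≤ Cⁿ M(x) is bounded by C, and extends to a bounded operator on H
of norm at most C. -/
theorem symmetric_power_bound_extension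
    (H : Type*) [NormedAddCommGroup H] [InnerProductSpace ℝ H] [CompleteSpace H]
    (D : Submodule ℝ H) (hD : Dense (D : Set H))
    (A : D →ₗ[ℝ] D)
    (hsym : ∀ x y : D, (inner ℝ ((A x : H)) ((y : H)) : ℝ) = (inner ℝ ((x : H)) ((A y : H)) : ℝ))
    (C : ℝ) (hC : 0 ≤ C) (M : D → ℝ)
    (hpow : ∀ (n : ℕ) (x : D), ‖((A ^ n) x : H)‖ ≤ C ^ n * M x) :
    (∀ x : D, ‖(A x : H)‖ ≤ C * ‖(x : H)‖) ∧
    ∃ Abar : H →L[ℝ] H, (∀ x : D, Abar (x : H) = (A x : H)) ∧ ‖Abar‖ ≤ C := by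
  have hA : A.IsSymmetric := hsym
  have hbound : ∀ x : D, ‖(A x : H)‖ ≤ C * ‖(x : H)‖ :=
    hA.norm_apply_le_of_norm_pow_apply_le hC hpow
  have hdense : DenseRange D.subtype := hD.denseRange_val
  exact ⟨hbound, (D.subtype ∘ₗ A).extendOfNorm D.subtype,
    LinearMap.extendOfNorm_eq hdense ⟨C, hbound⟩, LinearMap.opNorm_extendOfNorm_le hdense hC hbound⟩
end

section
/- Every infinite-dimensional separable Banach space B admits a triple H₁ ⊆ B ⊆ H₂ where H₁ and H₂ are separable Hilbert spaces and both inclusions are continuous dense embeddings. -/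
/-!
Take an orthonormal sequence `(eₙ)` in `ℓ²`, a sequence `(vₙ)` in the unit ball of `B` with
dense span, and a sequence `(φₙ)` in the unit ball of the dual of `B` separating points
(norming functionals at the points of a dense sequence). The series of rank-one operators
`T a = ∑ 2⁻ⁿ ⟪eₙ, a⟫ vₙ` and `S x = ∑ 2⁻ⁿ φₙ(x) eₙ` converge in operator norm.
Since `T eₙ = 2⁻ⁿ vₙ`, `T : ℓ² → B` has dense range, and it is injective on `H₁ = (ker T)ᗮ`
without losing any of its range. Since `⟪eₙ, S x⟫ = 2⁻ⁿ φₙ(x)`, `S : B → ℓ²` is injective,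
and it has dense range in `H₂ = closure (range S)`.
-/

open TopologicalSpace Set
open scoped lp

section

variable {𝕜 E F H : Type*} [RCLike 𝕜]
  [NormedAddCommGroup E] [NormedSpace 𝕜 E] [NormedAddCommGroup F] [NormedSpace 𝕜 F]
  [NormedAddCommGroup H] [InnerProductSpace 𝕜 H]

theorem HilbertBasis.separableSpace {ι : Type*} [Countable ι] (b : HilbertBasis ι 𝕜 H) :
    SeparableSpace H := by
  have h := ((countable_range b).isSeparable.span (R := 𝕜)).closure
  rwa [← Submodule.topologicalClosure_coe, b.dense_span, Submodule.top_coe,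
    isSeparable_univ_iff] at h

variable (𝕜 E) in
theorem exists_norm_le_one_dense_span [SeparableSpace E] :
    ∃ v : ℕ → E, (∀ n, ‖v n‖ ≤ 1) ∧ Dense (Submodule.span 𝕜 (range v) : Set E) := by
  obtain ⟨d, hd⟩ := exists_dense_seq E
  have hpos : ∀ n, (0 : ℝ) < 1 + ‖d n‖ := fun n => by positivity
  refine ⟨fun n => ((1 + ‖d n‖ : ℝ) : 𝕜)⁻¹ • d n, fun n => ?_, hd.mono ?_⟩
  · rw [norm_smul, norm_inv, RCLike.norm_ofReal, abs_of_pos (hpos n), inv_mul_le_one₀ (hpos n)]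
    linarith
  · rintro _ ⟨n, rfl⟩
    rw [← smul_inv_smul₀ (RCLike.ofReal_ne_zero (K := 𝕜) |>.2 (hpos n).ne') (d n)]
    exact Submodule.smul_mem _ _ (Submodule.subset_span (mem_range_self n))

variable (𝕜 E) in
theorem exists_norm_le_one_separating_dual [SeparableSpace E] :
    ∃ φ : ℕ → StrongDual 𝕜 E, (∀ n, ‖φ n‖ ≤ 1) ∧ ∀ x, (∀ n, φ n x = 0) → x = 0 := by
  obtain ⟨d, hd⟩ := exists_dense_seq E
  choose φ hφ_norm hφ_eq using fun n => exists_dual_vector'' 𝕜 (d n)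
  refine ⟨φ, hφ_norm, fun x hx => ?_⟩
  have norm_le_two_mul_dist : ∀ n, ‖x‖ ≤ 2 * dist x (d n) := fun n => by
    have h : ‖d n‖ ≤ ‖x - d n‖ :=
      calc ‖d n‖ = ‖φ n (d n - x)‖ := by
            rw [map_sub, hx, sub_zero, hφ_eq, RCLike.norm_ofReal, abs_norm]
        _ ≤ ‖φ n‖ * ‖d n - x‖ := (φ n).le_opNorm _
        _ ≤ ‖x - d n‖ := by
            rw [norm_sub_rev]
            exact mul_le_of_le_one_left (norm_nonneg _) (hφ_norm n)
    rw [dist_eq_norm]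
    linarith [norm_le_norm_add_norm_sub' x (d n)]
  by_contra hx0
  obtain ⟨n, hn⟩ := Metric.denseRange_iff.1 hd x (‖x‖ / 2) (by positivity)
  linarith [norm_le_two_mul_dist n]

noncomputable def dyadicRankOneSum (φ : ℕ → StrongDual 𝕜 E) (v : ℕ → F) : E →L[𝕜] F :=
  ∑' n, (2⁻¹ : 𝕜) ^ n • (φ n).smulRight (v n)

section dyadicRankOneSum

variable [CompleteSpace F] {φ : ℕ → StrongDual 𝕜 E} {v : ℕ → F}

theorem hasSum_dyadicRankOneSum_apply (hφ : ∀ n, ‖φ n‖ ≤ 1) (hv : ∀ n, ‖v n‖ ≤ 1) (x : E) :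
    HasSum (fun n => ((2⁻¹ : 𝕜) ^ n * φ n x) • v n) (dyadicRankOneSum φ v x) := by
  have hsum : Summable fun n => (2⁻¹ : 𝕜) ^ n • (φ n).smulRight (v n) := by
    refine .of_norm_bounded summable_geometric_two fun n => ?_
    rw [norm_smul, ContinuousLinearMap.norm_smulRight_apply, norm_pow, norm_inv, RCLike.norm_two,
      one_div, inv_pow]
    exact mul_le_of_le_one_right (by positivity) (mul_le_one₀ (hφ n) (norm_nonneg _) (hv n))
  simpa only [dyadicRankOneSum, ContinuousLinearMap.apply_apply, smul_apply,
    ContinuousLinearMap.smulRight_apply, mul_smul] using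
    hsum.hasSum.mapL (ContinuousLinearMap.apply 𝕜 F x)

theorem dyadicRankOneSum_innerSL_apply {e : ℕ → H} (he : Orthonormal 𝕜 e) (hv : ∀ n, ‖v n‖ ≤ 1)
    (m : ℕ) : dyadicRankOneSum (fun n => innerSL 𝕜 (e n)) v (e m) = (2⁻¹ : 𝕜) ^ m • v m := by
  classical
  have h := hasSum_dyadicRankOneSum_apply (φ := fun n => innerSL 𝕜 (e n))
    (fun n => by rw [innerSL_apply_norm, he.1 n]) hv (e m)
  simp only [innerSL_apply_apply, orthonormal_iff_ite.1 he] at h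
  rw [← h.tsum_eq, tsum_eq_single m fun n hn => by simp [hn], if_pos rfl, mul_one]

theorem inner_dyadicRankOneSum_apply {e : ℕ → H} [CompleteSpace H] (he : Orthonormal 𝕜 e)
    (hφ : ∀ n, ‖φ n‖ ≤ 1) (x : E) (m : ℕ) :
    inner 𝕜 (e m) (dyadicRankOneSum φ e x) = (2⁻¹ : 𝕜) ^ m * φ m x := by
  classical
  have h := (hasSum_dyadicRankOneSum_apply hφ (fun n => (he.1 n).le) x).mapL (innerSL 𝕜 (e m))
  simp only [innerSL_apply_apply, inner_smul_right, orthonormal_iff_ite.1 he] at h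
  rw [← h.tsum_eq, tsum_eq_single m fun n hn => by simp [Ne.symm hn], if_pos rfl, mul_one]

theorem denseRange_dyadicRankOneSum_innerSL {e : ℕ → H} (he : Orthonormal 𝕜 e)
    (hv : ∀ n, ‖v n‖ ≤ 1) (hv_dense : Dense (Submodule.span 𝕜 (range v) : Set F)) :
    DenseRange (dyadicRankOneSum (fun n => innerSL 𝕜 (e n)) v) := by
  have hspan : Submodule.span 𝕜 (range v) ≤
      LinearMap.range (dyadicRankOneSum (fun n => innerSL 𝕜 (e n)) v : H →ₗ[𝕜] F) := by
    rw [Submodule.span_le, range_subset_iff]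
    intro m
    refine ⟨(2 : 𝕜) ^ m • e m, ?_⟩
    rw [map_smul, ContinuousLinearMap.coe_coe, dyadicRankOneSum_innerSL_apply he hv, smul_smul,
      ← mul_pow, mul_inv_cancel₀ two_ne_zero, one_pow, one_smul]
  exact hv_dense.mono fun _ hx => hspan hx

theorem injective_dyadicRankOneSum [CompleteSpace H] {e : ℕ → H} (he : Orthonormal 𝕜 e)
    (hφ : ∀ n, ‖φ n‖ ≤ 1) (hφ_sep : ∀ x, (∀ n, φ n x = 0) → x = 0) :
    Function.Injective (dyadicRankOneSum φ e) := by
  refine (injective_iff_map_eq_zero _).2 fun x hx => hφ_sep x fun m => ?_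
  have h := inner_dyadicRankOneSum_apply he hφ x m
  rw [hx, inner_zero_right, eq_comm, mul_eq_zero] at h
  exact h.resolve_left (pow_ne_zero _ (inv_ne_zero two_ne_zero))

end dyadicRankOneSum

namespace ContinuousLinearMap

theorem injective_comp_subtypeL_orthogonal_ker (T : H →L[𝕜] F) :
    Function.Injective (T ∘L (LinearMap.ker (T : H →ₗ[𝕜] F))ᗮ.subtypeL) :=
  (injective_iff_map_eq_zero _).2 fun z hz =>
    Subtype.ext (Submodule.disjoint_def.1 (Submodule.orthogonal_disjoint _) (z : H) hz z.2)

theorem range_comp_subtypeL_orthogonal_ker [CompleteSpace H] (T : H →L[𝕜] F) :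
    range (T ∘L (LinearMap.ker (T : H →ₗ[𝕜] F))ᗮ.subtypeL) = range T := by
  have : CompleteSpace (LinearMap.ker (T : H →ₗ[𝕜] F)) := T.isClosed_ker.completeSpace_coe
  rw [coe_comp]
  refine (range_comp_subset_range _ _).antisymm ?_
  rintro _ ⟨u, rfl⟩
  obtain ⟨y, hy, z, hz, rfl⟩ := (LinearMap.ker (T : H →ₗ[𝕜] F)).exists_add_mem_mem_orthogonal u
  exact ⟨⟨z, hz⟩, by simp [show T y = 0 from hy]⟩

noncomputable def codRestrictClosureRange (S : E →L[𝕜] F) :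
    E →L[𝕜] (LinearMap.range (S : E →ₗ[𝕜] F)).topologicalClosure :=
  S.codRestrict _ fun x =>
    Submodule.le_topologicalClosure _ (LinearMap.mem_range_self (S : E →ₗ[𝕜] F) x)

theorem injective_codRestrictClosureRange {S : E →L[𝕜] F} (hS : Function.Injective S) :
    Function.Injective S.codRestrictClosureRange :=
  fun _ _ h => hS (Subtype.ext_iff.1 h :)

theorem denseRange_codRestrictClosureRange (S : E →L[𝕜] F) :
    DenseRange S.codRestrictClosureRange := by
  rw [DenseRange, Subtype.dense_iff, ← range_comp]
  exact (Submodule.topologicalClosure_coe _).le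

end ContinuousLinearMap

end

theorem gross_kuelbs_rigging_general
    (B : Type*) [NormedAddCommGroup B] [NormedSpace ℝ B] [CompleteSpace B]
    [TopologicalSpace.SeparableSpace B] :
    ∃ (H₁ : Type) (nG₁ : NormedAddCommGroup H₁) (iP₁ : @InnerProductSpace ℝ H₁ _ nG₁.toSeminormedAddCommGroup)
      (H₂ : Type) (nG₂ : NormedAddCommGroup H₂) (iP₂ : @InnerProductSpace ℝ H₂ _ nG₂.toSeminormedAddCommGroup),
      CompleteSpace H₁ ∧ TopologicalSpace.SeparableSpace H₁ ∧
      CompleteSpace H₂ ∧ TopologicalSpace.SeparableSpace H₂ ∧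
      (∃ j₁ : H₁ →L[ℝ] B, Function.Injective j₁ ∧ DenseRange j₁) ∧
      (∃ j₂ : B →L[ℝ] H₂, Function.Injective j₂ ∧ DenseRange j₂) := by
  let e : HilbertBasis ℕ ℝ ℓ²(ℕ, ℝ) := default
  have : SeparableSpace ℓ²(ℕ, ℝ) := e.separableSpace
  obtain ⟨v, hv, hv_dense⟩ := exists_norm_le_one_dense_span ℝ B
  obtain ⟨φ, hφ, hφ_sep⟩ := exists_norm_le_one_separating_dual ℝ B
  let T := dyadicRankOneSum (fun n => innerSL ℝ (e n)) v
  let S := dyadicRankOneSum φ e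
  refine ⟨(LinearMap.ker (T : ℓ²(ℕ, ℝ) →ₗ[ℝ] B))ᗮ, _, _,
    (LinearMap.range (S : B →ₗ[ℝ] ℓ²(ℕ, ℝ))).topologicalClosure, _, _,
    inferInstance, inferInstance, inferInstance, inferInstance,
    ⟨_, T.injective_comp_subtypeL_orthogonal_ker, ?_⟩,
    ⟨_, S.injective_codRestrictClosureRange (injective_dyadicRankOneSum e.orthonormal hφ hφ_sep),
      S.denseRange_codRestrictClosureRange⟩⟩
  rw [DenseRange, T.range_comp_subtypeL_orthogonal_ker]
  exact denseRange_dyadicRankOneSum_innerSL e.orthonormal hv hv_dense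

/-- Gross–Kuelbs rigging: every infinite-dimensional separable
Banach space B sits in a triple H₁ ⊆ B ⊆ H₂ of continuous dense embeddings,
with H₁ and H₂ separable Hilbert spaces. -/
theorem gross_kuelbs_rigging
    (B : Type*) [NormedAddCommGroup B] [NormedSpace ℝ B] [CompleteSpace B]
    [TopologicalSpace.SeparableSpace B]
    (hinf : ¬ FiniteDimensional ℝ B) :
    ∃ (H₁ : Type) (nG₁ : NormedAddCommGroup H₁) (iP₁ : @InnerProductSpace ℝ H₁ _ nG₁.toSeminormedAddCommGroup)
      (H₂ : Type) (nG₂ : NormedAddCommGroup H₂) (iP₂ : @InnerProductSpace ℝ H₂ _ nG₂.toSeminormedAddCommGroup),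
      CompleteSpace H₁ ∧ TopologicalSpace.SeparableSpace H₁ ∧
      CompleteSpace H₂ ∧ TopologicalSpace.SeparableSpace H₂ ∧
      (∃ j₁ : H₁ →L[ℝ] B, Function.Injective j₁ ∧ DenseRange j₁) ∧
      (∃ j₂ : B →L[ℝ] H₂, Function.Injective j₂ ∧ DenseRange j₂) :=
  gross_kuelbs_rigging_general B
end
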